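/- For any graph G and real α ≥ −1/2 with α ≠ 0, δ·Δ^(−2α−1)·R_α(G) ≤ GA₁(G) ≤ Δ·δ^(−2α−1)·R_α(G), with each equality if and only if G is regular. -/

import Mathlib

open Finset Real

variable {V : Type*}

noncomputable def edgeSum (G : SimpleGraph V) [Fintype V] [DecidableRel G.Adj]
    (f : ℝ → ℝ → ℝ) (hf : ∀ a b, f a b = f b a) : ℝ :=
  ∑ e ∈ G.edgeFinset,
    Sym2.lift ⟨fun u v => f (G.degree u) (G.degree v), fun u v => hf _ _⟩ e

noncomputable def GA1 (G : SimpleGraph V) [Fintype V] [DecidableRel G.Adj] : ℝ :=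
  edgeSum G (fun x y => 2 * Real.sqrt (x * y) / (x + y))
    (fun a b => by rw [mul_comm a b, add_comm a b])

noncomputable def M1 (G : SimpleGraph V) [Fintype V] [DecidableRel G.Adj] : ℝ :=
  ∑ u : V, (G.degree u : ℝ) ^ 2

noncomputable def M2 (G : SimpleGraph V) [Fintype V] [DecidableRel G.Adj] : ℝ :=
  edgeSum G (fun x y => x * y) (fun a b => mul_comm a b)

noncomputable def randic (G : SimpleGraph V) [Fintype V] [DecidableRel G.Adj] : ℝ :=
  edgeSum G (fun x y => 1 / Real.sqrt (x * y)) (fun a b => by rw [mul_comm a b])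

noncomputable def genRandic (G : SimpleGraph V) [Fintype V] [DecidableRel G.Adj] (α : ℝ) : ℝ :=
  edgeSum G (fun x y => (x * y) ^ α) (fun a b => by rw [mul_comm a b])

noncomputable def modZagreb (G : SimpleGraph V) [Fintype V] [DecidableRel G.Adj] : ℝ :=
  edgeSum G (fun x y => 1 / (x * y)) (fun a b => by rw [mul_comm a b])

noncomputable def NKstar (G : SimpleGraph V) [Fintype V] [DecidableRel G.Adj] : ℝ :=
  ∏ e ∈ G.edgeFinset,
    Sym2.lift ⟨fun u v => ((G.degree u : ℝ) * (G.degree v : ℝ)), fun u v => mul_comm _ _⟩ e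

def GraphRegular (G : SimpleGraph V) [Fintype V] [DecidableRel G.Adj] : Prop :=
  ∃ k, G.IsRegularOfDegree k

/-!
On an edge with end-degrees `x, y`, the GA₁ term is `H(x, y) / √(xy)` with `H = 2xy/(x+y)` the
harmonic mean, while `c · D^(-2α-1) · (xy)^α = c · (xy/D²)^(α+1/2) / √(xy)`. Since `α + 1/2 ≥ 0`
and `δ² ≤ xy ≤ Δ²`, both bounds follow edge by edge from `δ ≤ H(x, y) ≤ Δ`. These are strict as
soon as one end-degree differs from `δ` (resp. `Δ`); in a connected graph with an edge every
vertex has a neighbour, so a non-regular graph has such an edge and the bound is strict.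
-/

section RealInequalities

variable {c t x y d D α : ℝ}

lemma rpow_neg_two_mul_sub_one_mul_rpow (hc : 0 < c) (ht : 0 < t) :
    c ^ (-(2 * α) - 1) * t ^ α = (t / c ^ 2) ^ (α + 1 / 2) / √t := by
  rw [div_rpow ht.le (by positivity), ← rpow_natCast, ← rpow_mul hc.le, sqrt_eq_rpow,
    show -(2 * α) - 1 = -((2 : ℕ) * (α + 1 / 2)) by push_cast; ring, rpow_neg hc.le,
    rpow_add ht]
  have : 0 < t ^ (1 / 2 : ℝ) := by positivity
  field_simp

lemma two_mul_sqrt_div_add_eq (hx : 0 < x) (hy : 0 < y) :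
    2 * √(x * y) / (x + y) = 2 * x * y / (x + y) / √(x * y) := by
  have : 0 < √(x * y) := by positivity
  field_simp
  rw [sq_sqrt (by positivity)]

lemma mul_rpow_mul_rpow_le_div_sqrt (hc : 0 ≤ c) (hx : 0 < x) (hy : 0 < y) (hxD : x ≤ D)
    (hyD : y ≤ D) (hα : -(1 / 2) ≤ α) :
    c * D ^ (-(2 * α) - 1) * (x * y) ^ α ≤ c / √(x * y) := by
  have hD : 0 < D := hx.trans_le hxD
  rw [mul_assoc, rpow_neg_two_mul_sub_one_mul_rpow hD (by positivity), mul_div_assoc']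
  gcongr
  refine mul_le_of_le_one_right hc (rpow_le_one (by positivity) ?_ (by linarith))
  rw [div_le_one (by positivity), sq]
  exact mul_le_mul hxD hyD hy.le hD.le

lemma div_sqrt_le_mul_rpow_mul_rpow (hc : 0 ≤ c) (hd : 0 < d) (hdx : d ≤ x) (hdy : d ≤ y)
    (hα : -(1 / 2) ≤ α) :
    c / √(x * y) ≤ c * d ^ (-(2 * α) - 1) * (x * y) ^ α := by
  have hx : 0 < x := hd.trans_le hdx
  rw [mul_assoc, rpow_neg_two_mul_sub_one_mul_rpow hd (by nlinarith), mul_div_assoc']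
  gcongr
  refine le_mul_of_one_le_right hc (one_le_rpow ?_ (by linarith))
  rw [one_le_div (by positivity), sq]
  exact mul_le_mul hdx hdy hd.le hx.le

lemma le_two_mul_mul_div_add (hd : 0 < d) (hdx : d ≤ x) (hdy : d ≤ y) :
    d ≤ 2 * x * y / (x + y) := by
  rw [le_div_iff₀ (by linarith)]
  nlinarith

lemma lt_two_mul_mul_div_add (hd : 0 < d) (hdx : d < x) (hdy : d ≤ y) :
    d < 2 * x * y / (x + y) := by
  rw [lt_div_iff₀ (by linarith)]
  nlinarith

lemma two_mul_mul_div_add_le (hx : 0 < x) (hy : 0 < y) (hxD : x ≤ D) (hyD : y ≤ D) :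
    2 * x * y / (x + y) ≤ D := by
  rw [div_le_iff₀ (by linarith)]
  nlinarith

lemma two_mul_mul_div_add_lt (hx : 0 < x) (hy : 0 < y) (hxD : x < D) (hyD : y ≤ D) :
    2 * x * y / (x + y) < D := by
  rw [div_lt_iff₀ (by linarith)]
  nlinarith

end RealInequalities

section EdgeBounds

variable {k x y d D α : ℝ}

lemma mul_rpow_mul_rpow_le_two_mul_sqrt_div_add (hd : 0 < d) (hdx : d ≤ x) (hdy : d ≤ y)
    (hxD : x ≤ D) (hyD : y ≤ D) (hα : -(1 / 2) ≤ α) :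
    d * D ^ (-(2 * α) - 1) * (x * y) ^ α ≤ 2 * √(x * y) / (x + y) := by
  have hx : 0 < x := hd.trans_le hdx
  have hy : 0 < y := hd.trans_le hdy
  rw [two_mul_sqrt_div_add_eq hx hy]
  exact (mul_rpow_mul_rpow_le_div_sqrt hd.le hx hy hxD hyD hα).trans
    (div_le_div_of_nonneg_right (le_two_mul_mul_div_add hd hdx hdy) (sqrt_nonneg _))

lemma mul_rpow_mul_rpow_lt_two_mul_sqrt_div_add (hd : 0 < d) (hdx : d < x) (hdy : d ≤ y)
    (hxD : x ≤ D) (hyD : y ≤ D) (hα : -(1 / 2) ≤ α) :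
    d * D ^ (-(2 * α) - 1) * (x * y) ^ α < 2 * √(x * y) / (x + y) := by
  have hx : 0 < x := hd.trans hdx
  have hy : 0 < y := hd.trans_le hdy
  rw [two_mul_sqrt_div_add_eq hx hy]
  exact (mul_rpow_mul_rpow_le_div_sqrt hd.le hx hy hxD hyD hα).trans_lt
    (div_lt_div_of_pos_right (lt_two_mul_mul_div_add hd hdx hdy) (by positivity))

lemma two_mul_sqrt_div_add_le_mul_rpow_mul_rpow (hd : 0 < d) (hdx : d ≤ x) (hdy : d ≤ y)
    (hxD : x ≤ D) (hyD : y ≤ D) (hα : -(1 / 2) ≤ α) :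
    2 * √(x * y) / (x + y) ≤ D * d ^ (-(2 * α) - 1) * (x * y) ^ α := by
  have hx : 0 < x := hd.trans_le hdx
  have hy : 0 < y := hd.trans_le hdy
  rw [two_mul_sqrt_div_add_eq hx hy]
  exact (div_le_div_of_nonneg_right (two_mul_mul_div_add_le hx hy hxD hyD) (sqrt_nonneg _)).trans
    (div_sqrt_le_mul_rpow_mul_rpow (hx.trans_le hxD).le hd hdx hdy hα)

lemma two_mul_sqrt_div_add_lt_mul_rpow_mul_rpow (hd : 0 < d) (hdx : d ≤ x) (hdy : d ≤ y)
    (hxD : x < D) (hyD : y ≤ D) (hα : -(1 / 2) ≤ α) :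
    2 * √(x * y) / (x + y) < D * d ^ (-(2 * α) - 1) * (x * y) ^ α := by
  have hx : 0 < x := hd.trans_le hdx
  have hy : 0 < y := hd.trans_le hdy
  rw [two_mul_sqrt_div_add_eq hx hy]
  exact (div_lt_div_of_pos_right (two_mul_mul_div_add_lt hx hy hxD hyD) (by positivity)).trans_le
    (div_sqrt_le_mul_rpow_mul_rpow (hx.trans hxD).le hd hdx hdy hα)

lemma mul_rpow_mul_rpow_self (hk : 0 ≤ k) :
    k * k ^ (-(2 * α) - 1) * (k * k) ^ α = 2 * √(k * k) / (k + k) := by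
  obtain rfl | hk := hk.eq_or_lt
  · simp
  rw [mul_assoc, rpow_neg_two_mul_sub_one_mul_rpow hk (by positivity),
    two_mul_sqrt_div_add_eq hk hk, ← sq, div_self (by positivity), one_rpow]
  field_simp
  ring

end EdgeBounds

section EdgeSum

variable (G : SimpleGraph V) [Fintype V] [DecidableRel G.Adj] {f g : ℝ → ℝ → ℝ}
  (hf : ∀ a b, f a b = f b a) (hg : ∀ a b, g a b = g b a)

lemma mul_edgeSum (c : ℝ) :
    c * edgeSum G f hf = edgeSum G (fun a b => c * f a b) (fun a b => by rw [hf]) := by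
  rw [edgeSum, edgeSum, mul_sum]
  refine sum_congr rfl fun e _ => ?_
  induction e using Sym2.ind
  rfl

lemma edgeSum_lt_edgeSum
    (hle : ∀ u v, G.Adj u v → f (G.degree u) (G.degree v) ≤ g (G.degree u) (G.degree v))
    {u v : V} (huv : G.Adj u v) (hlt : f (G.degree u) (G.degree v) < g (G.degree u) (G.degree v)) :
    edgeSum G f hf < edgeSum G g hg := by
  refine sum_lt_sum (fun e he => ?_) ⟨s(u, v), G.mem_edgeFinset.2 huv, hlt⟩
  induction e using Sym2.ind with
  | _ a b => exact hle a b (G.mem_edgeFinset.1 he)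

lemma edgeSum_of_isRegularOfDegree {k : ℕ} (hG : G.IsRegularOfDegree k) :
    edgeSum G f hf = #G.edgeFinset * f k k := by
  rw [edgeSum, ← nsmul_eq_mul, ← sum_const]
  refine sum_congr rfl fun e _ => ?_
  induction e using Sym2.ind
  simp [hG.degree_eq]

end EdgeSum

section Degrees

variable {G : SimpleGraph V} [Fintype V] [DecidableRel G.Adj]

lemma SimpleGraph.Connected.minDegree_pos (hc : G.Connected) (hm : G.edgeFinset.Nonempty) :
    0 < G.minDegree := by
  obtain ⟨e, he⟩ := hm
  induction e using Sym2.ind with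
  | _ u v =>
    have := (G.mem_edgeFinset.1 he).nontrivial
    exact hc.preconnected.minDegree_pos_of_nontrivial

lemma exists_minDegree_lt_degree (hG : ¬GraphRegular G) : ∃ v, G.minDegree < G.degree v := by
  by_contra! h
  exact hG ⟨G.minDegree, fun v => (h v).antisymm (G.minDegree_le_degree v)⟩

lemma exists_degree_lt_maxDegree (hG : ¬GraphRegular G) : ∃ v, G.degree v < G.maxDegree := by
  by_contra! h
  exact hG ⟨G.maxDegree, fun v => (G.degree_le_maxDegree v).antisymm (h v)⟩

end Degrees

section GeometricArithmeticIndex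

variable {G : SimpleGraph V} [Fintype V] [DecidableRel G.Adj] {α : ℝ}

lemma GA1_eq_of_isRegularOfDegree {k : ℕ} (hG : G.IsRegularOfDegree k) (α : ℝ) :
    GA1 G = k * (k : ℝ) ^ (-(2 * α) - 1) * genRandic G α := by
  simp only [GA1, genRandic, edgeSum_of_isRegularOfDegree G _ hG,
    ← mul_rpow_mul_rpow_self (Nat.cast_nonneg (α := ℝ) k) (α := α)]
  ring

lemma cast_minDegree_le_degree (v : V) : (G.minDegree : ℝ) ≤ G.degree v := by
  exact_mod_cast G.minDegree_le_degree v

lemma cast_degree_le_maxDegree (v : V) : (G.degree v : ℝ) ≤ G.maxDegree := by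
  exact_mod_cast G.degree_le_maxDegree v

lemma minDegree_mul_genRandic_lt_GA1 (hc : G.Connected) (hm : G.edgeFinset.Nonempty)
    (hα : -(1 / 2) ≤ α) (hG : ¬GraphRegular G) :
    (G.minDegree : ℝ) * (G.maxDegree : ℝ) ^ (-(2 * α) - 1) * genRandic G α < GA1 G := by
  have hδ : (0 : ℝ) < G.minDegree := by exact_mod_cast hc.minDegree_pos hm
  obtain ⟨u, hu⟩ := exists_minDegree_lt_degree hG
  obtain ⟨w, huw⟩ := (G.degree_pos_iff_exists_adj u).1 ((hc.minDegree_pos hm).trans hu)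
  rw [genRandic, mul_edgeSum, GA1]
  exact edgeSum_lt_edgeSum G _ _
    (fun a b _ => mul_rpow_mul_rpow_le_two_mul_sqrt_div_add hδ (cast_minDegree_le_degree a)
      (cast_minDegree_le_degree b) (cast_degree_le_maxDegree a) (cast_degree_le_maxDegree b) hα)
    huw (mul_rpow_mul_rpow_lt_two_mul_sqrt_div_add hδ (by exact_mod_cast hu)
      (cast_minDegree_le_degree w) (cast_degree_le_maxDegree u) (cast_degree_le_maxDegree w) hα)

lemma GA1_lt_maxDegree_mul_genRandic (hc : G.Connected) (hm : G.edgeFinset.Nonempty)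
    (hα : -(1 / 2) ≤ α) (hG : ¬GraphRegular G) :
    GA1 G < (G.maxDegree : ℝ) * (G.minDegree : ℝ) ^ (-(2 * α) - 1) * genRandic G α := by
  have hδ : (0 : ℝ) < G.minDegree := by exact_mod_cast hc.minDegree_pos hm
  obtain ⟨u, hu⟩ := exists_degree_lt_maxDegree hG
  obtain ⟨w, huw⟩ := (G.degree_pos_iff_exists_adj u).1
    ((hc.minDegree_pos hm).trans_le (G.minDegree_le_degree u))
  rw [genRandic, mul_edgeSum, GA1]
  exact edgeSum_lt_edgeSum G _ _
    (fun a b _ => two_mul_sqrt_div_add_le_mul_rpow_mul_rpow hδ (cast_minDegree_le_degree a)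
      (cast_minDegree_le_degree b) (cast_degree_le_maxDegree a) (cast_degree_le_maxDegree b) hα)
    huw (two_mul_sqrt_div_add_lt_mul_rpow_mul_rpow hδ (cast_minDegree_le_degree u)
      (cast_minDegree_le_degree w) (by exact_mod_cast hu) (cast_degree_le_maxDegree w) hα)

end GeometricArithmeticIndex

theorem stmt12_general (G : SimpleGraph V) [Fintype V] [DecidableRel G.Adj]
    (hc : G.Connected) (hm : G.edgeFinset.Nonempty) (α : ℝ) (hα : -(1/2) ≤ α) :
    (G.minDegree : ℝ) * (G.maxDegree : ℝ) ^ (-(2 * α) - 1) * genRandic G α ≤ GA1 G ∧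
    GA1 G ≤ (G.maxDegree : ℝ) * (G.minDegree : ℝ) ^ (-(2 * α) - 1) * genRandic G α ∧
    (GA1 G = (G.minDegree : ℝ) * (G.maxDegree : ℝ) ^ (-(2 * α) - 1) * genRandic G α ↔ GraphRegular G) ∧
    (GA1 G = (G.maxDegree : ℝ) * (G.minDegree : ℝ) ^ (-(2 * α) - 1) * genRandic G α ↔ GraphRegular G) := by
  have := hc.nonempty
  have eq_of_regular (hG : GraphRegular G) :
      GA1 G = (G.minDegree : ℝ) * (G.maxDegree : ℝ) ^ (-(2 * α) - 1) * genRandic G α ∧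
      GA1 G = (G.maxDegree : ℝ) * (G.minDegree : ℝ) ^ (-(2 * α) - 1) * genRandic G α := by
    obtain ⟨k, hk⟩ := hG
    rw [hk.minDegree_eq, hk.maxDegree_eq]
    exact ⟨GA1_eq_of_isRegularOfDegree hk α, GA1_eq_of_isRegularOfDegree hk α⟩
  have lower_lt := minDegree_mul_genRandic_lt_GA1 hc hm hα
  have upper_lt := GA1_lt_maxDegree_mul_genRandic hc hm hα
  refine ⟨?_, ?_, ⟨fun h => ?_, fun hG => (eq_of_regular hG).1⟩,
    ⟨fun h => ?_, fun hG => (eq_of_regular hG).2⟩⟩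
  · by_cases hG : GraphRegular G
    · exact (eq_of_regular hG).1.ge
    · exact (lower_lt hG).le
  · by_cases hG : GraphRegular G
    · exact (eq_of_regular hG).2.le
    · exact (upper_lt hG).le
  · by_contra hG
    exact (lower_lt hG).ne' h
  · by_contra hG
    exact (upper_lt hG).ne h

theorem stmt12 (G : SimpleGraph V) [Fintype V] [DecidableRel G.Adj]
    (hc : G.Connected) (hm : G.edgeFinset.Nonempty) (α : ℝ) (hα : -(1/2) ≤ α) (hα0 : α ≠ 0) :
    (G.minDegree : ℝ) * (G.maxDegree : ℝ) ^ (-(2 * α) - 1) * genRandic G α ≤ GA1 G ∧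
    GA1 G ≤ (G.maxDegree : ℝ) * (G.minDegree : ℝ) ^ (-(2 * α) - 1) * genRandic G α ∧
    (GA1 G = (G.minDegree : ℝ) * (G.maxDegree : ℝ) ^ (-(2 * α) - 1) * genRandic G α ↔ GraphRegular G) ∧
    (GA1 G = (G.maxDegree : ℝ) * (G.minDegree : ℝ) ^ (-(2 * α) - 1) * genRandic G α ↔ GraphRegular G) :=
  stmt12_general G hc hm α hα
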